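/- For all integers k ≥ 2 and q ≥ 1, the following hold: q · χ^quasi_{Ž_k}(q) = (q−1)(q−2)^k − (−2)^k(2q−1) + (−1)^k · q · Σ_{j=0}^{k} C(k,j) · gcd(j−1, q), and q · χ^quasi_{Ñ_k}(q) = (q−1)^k + (−1)^k(q−1) + q · χ^quasi_{Ž_k}(q), where C(k,j) is the binomial coefficient and gcd denotes the nonnegative gcd of integers (so gcd(−1, q) = 1 and gcd(0, q) = q). -/

import Mathlib

/-!
For `u ∈ (ℤ/qℤ)^k` with coordinate sum `σ`, the coordinates of `u Ž_k` are the `uᵢ`, the `σ - uᵢ`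
and `σ`, so `χ_{Ž_k}(q)` counts the `u` with `σ ≠ 0` whose entries all avoid `{0, σ}`, and
`χ_{Ñ_k}(q)` counts the same tuples without the condition `σ ≠ 0`. Sorting by the value `s` of `σ`
reduces both to the numbers `N_A(m, t) = sumCount A m t` of `m`-tuples with entries in `A` and
sum `t`, for `A` the complement of a set `F`. Peeling off the first entry gives the recursion
`N_{Fᶜ}(m + 1, t) = |Fᶜ|^m - ∑_{f ∈ F} N_{Fᶜ}(m, t - f)`, which solves to
`q N_{Fᶜ}(m, t) = (q - |F|)^m + (-1)^m (q N_F(m, t) - |F|^m)`.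
For `F = {0, s}` the tuples in `F^m` summing to `s` are indexed by the subsets `T` with
`(|T| - 1) s = 0`, and `n s = 0` has `gcd(n, q)` solutions in `ℤ/qℤ`; summing over `s ≠ 0` gives
the gcd terms.
-/

open scoped BigOperators

namespace ArrCode

variable {k n : ℕ}

/-- The integer matrix `G` with entries reduced modulo `q`. -/
def Gmod (G : Matrix (Fin k) (Fin n) ℤ) (q : ℕ) : Matrix (Fin k) (Fin n) (ZMod q) :=
  G.map (Int.cast : ℤ → ZMod q)

/-- The code `C_G(q)` over `ℤ/qℤ` generated by the rows of `G`. -/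
def code (G : Matrix (Fin k) (Fin n) ℤ) (q : ℕ) : Set (Fin n → ZMod q) :=
  Set.range fun u : Fin k → ZMod q => Matrix.vecMul u (Gmod G q)

/-- `H_J(q) = { u ∈ (ℤ/qℤ)^k : u · g^j = 0 for all j ∈ J }`. -/
def HJ (G : Matrix (Fin k) (Fin n) ℤ) (J : Finset (Fin n)) (q : ℕ) :
    Set (Fin k → ZMod q) :=
  {u | ∀ j ∈ J, Matrix.vecMul u (Gmod G q) j = 0}

/-- The rank `r(J)` over `ℚ` of the column submatrix `G_J`. -/
noncomputable def rk (G : Matrix (Fin k) (Fin n) ℤ) (J : Finset (Fin n)) : ℕ :=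
  Matrix.rank (Matrix.of fun (i : Fin k) (j : J) => (G i j.1 : ℚ))

/-- The gcd of all `j × j` minors of the column submatrix `G_J`
(determinants of submatrices with repeated rows or columns vanish,
so this agrees with the usual minor gcd). -/
def minorGcd (G : Matrix (Fin k) (Fin n) ℤ) (J : Finset (Fin n)) (j : ℕ) : ℕ :=
  Finset.gcd Finset.univ fun p : (Fin j → Fin k) × (Fin j → J) =>
    ((G.submatrix p.1 fun l => (p.2 l : Fin n)).det).natAbs

/-- The `ℓ`-th elementary divisor (invariant factor) `e_{ℓ,J}` of `G_J`,
characterized by `e_{1,J} ⋯ e_{j,J} =` gcd of all `j × j` minors of `G_J`. -/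
def elemDiv (G : Matrix (Fin k) (Fin n) ℤ) (J : Finset (Fin n)) (ℓ : ℕ) : ℕ :=
  minorGcd G J ℓ / minorGcd G J (ℓ - 1)

/-- The lcm period `ρ₀ = lcm { e_{r(J),J} : ∅ ≠ J ⊆ E }`. -/
noncomputable def lcmPeriod (G : Matrix (Fin k) (Fin n) ℤ) : ℕ :=
  Finset.lcm ((Finset.univ : Finset (Fin n)).powerset.filter fun J => J ≠ ∅)
    fun J => elemDiv G J (rk G J)

/-- The minimum weight `d_q` of `C_G(q)` (equal to `+∞` when the code is trivial). -/
noncomputable def minWt (G : Matrix (Fin k) (Fin n) ℤ) (q : ℕ) : ℕ∞ :=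
  ⨅ (c : Fin n → ZMod q) (_ : c ∈ code G q) (_ : c ≠ 0), (hammingNorm c : ℕ∞)

/-- `A_{G,i}(q)`: the number of codewords of `C_G(q)` of Hamming weight `i`. -/
noncomputable def A (G : Matrix (Fin k) (Fin n) ℤ) (q i : ℕ) : ℕ :=
  {c ∈ code G q | hammingNorm c = i}.ncard

/-- The characteristic quasi-polynomial value: the number of `u ∈ (ℤ/qℤ)^k`
with every coordinate of `uG` nonzero. -/
noncomputable def chiQuasi (G : Matrix (Fin k) (Fin n) ℤ) (q : ℕ) : ℕ :=
  {u : Fin k → ZMod q | ∀ j, Matrix.vecMul u (Gmod G q) j ≠ 0}.ncard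

/-- `Π_{ℓ=1}^{r(J)} gcd(m, e_{ℓ,J})`. -/
noncomputable def gcdProd (G : Matrix (Fin k) (Fin n) ℤ) (m : ℕ) (J : Finset (Fin n)) : ℕ :=
  ∏ ℓ ∈ Finset.Icc 1 (rk G J), Nat.gcd m (elemDiv G J ℓ)

/-- The constituent polynomial `f_i^m(t) ∈ ℚ[t]`. -/
noncomputable def fPoly (G : Matrix (Fin k) (Fin n) ℤ) (m i : ℕ) : Polynomial ℚ :=
  ∑ J ∈ (Finset.univ : Finset (Fin n)).powerset.filter (fun J => J.card = n - i),
    ∑ K ∈ (Finset.univ : Finset (Fin n)).powerset.filter (fun K => J ⊆ K),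
      Polynomial.C ((-1 : ℚ) ^ (K.card - J.card) *
          (gcdProd G m K : ℚ) / (gcdProd G m Finset.univ : ℚ)) *
        Polynomial.X ^ (rk G Finset.univ - rk G K)

/-- `d'_m`: the least positive `i` such that `f_i^m` is not the zero polynomial. -/
noncomputable def dPrime (G : Matrix (Fin k) (Fin n) ℤ) (m : ℕ) : ℕ :=
  sInf {i : ℕ | 0 < i ∧ fPoly G m i ≠ 0}

end ArrCode

namespace ArrCode

/-- The matrix `Ñ_k = (I_k ∣ J_k − I_k)`. -/
def Ntilde (k : ℕ) : Matrix (Fin k) (Fin (2 * k)) ℤ :=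
  Matrix.of fun i j =>
    if (j : ℕ) < k then (if (i : ℕ) = (j : ℕ) then 1 else 0)
    else (if (i : ℕ) = (j : ℕ) - k then 0 else 1)

/-- The matrix `Ž_k = (I_k ∣ J_k − I_k ∣ 1_k)`. -/
def Ztilde (k : ℕ) : Matrix (Fin k) (Fin (2 * k + 1)) ℤ :=
  Matrix.of fun i j =>
    if (j : ℕ) < k then (if (i : ℕ) = (j : ℕ) then 1 else 0)
    else if (j : ℕ) < 2 * k then (if (i : ℕ) = (j : ℕ) - k then 0 else 1)
    else 1

open Finset

section SumCount

variable {R : Type*} [AddCommGroup R] [DecidableEq R]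

def sumCount (A : Finset R) (m : ℕ) (t : R) : ℕ :=
  #{u ∈ Fintype.piFinset fun _ : Fin m => A | ∑ i, u i = t}

lemma sumCount_zero (A : Finset R) (t : R) : sumCount A 0 t = if t = 0 then 1 else 0 := by
  split_ifs with ht <;> simp [sumCount, Fintype.piFinset_of_isEmpty, eq_comm, ht]

lemma sumCount_succ (A : Finset R) (m : ℕ) (t : R) :
    sumCount A (m + 1) t = ∑ a ∈ A, sumCount A m (t - a) := by
  rw [sumCount, card_eq_sum_card_fiberwise (f := fun u => u 0) (t := A)
    fun u hu => Fintype.mem_piFinset.mp (mem_filter.mp hu).1 0]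
  refine sum_congr rfl fun a ha => card_nbij' Fin.tail (fun v => Fin.cons a v) ?_ ?_ ?_ ?_
  · intro u hu
    simp only [mem_coe, mem_filter, Fintype.mem_piFinset, Fin.sum_univ_succ] at hu ⊢
    obtain ⟨⟨hA, hsum⟩, rfl⟩ := hu
    exact ⟨fun i => hA i.succ, by rw [← hsum]; simp [Fin.tail]⟩
  · intro v hv
    simp only [mem_coe, mem_filter, Fintype.mem_piFinset, Fin.sum_univ_succ, Fin.forall_fin_succ,
      Fin.cons_zero, Fin.cons_succ] at hv ⊢
    exact ⟨⟨⟨ha, hv.1⟩, by rw [hv.2]; abel⟩, trivial⟩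
  · intro u hu
    simp only [mem_coe, mem_filter] at hu
    simp [← hu.2]
  · intro v _
    exact Fin.tail_cons _ _

lemma sum_sumCount_sub [Fintype R] (A : Finset R) (m : ℕ) (t : R) :
    ∑ a, sumCount A m (t - a) = #A ^ m := by
  rw [Fintype.sum_equiv (Equiv.subLeft t) (fun a => sumCount A m (t - a)) (sumCount A m)
    fun _ => rfl]
  simp only [sumCount]
  rw [← card_eq_sum_card_fiberwise (fun _ _ => mem_univ _), Fintype.card_piFinset_const]

lemma sumCount_compl_succ_add [Fintype R] (F : Finset R) (m : ℕ) (t : R) :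
    sumCount Fᶜ (m + 1) t + ∑ f ∈ F, sumCount Fᶜ m (t - f) = #Fᶜ ^ m := by
  rw [sumCount_succ, sum_compl_add_sum, sum_sumCount_sub]

theorem card_mul_sumCount_compl [Fintype R] (F : Finset R) (m : ℕ) (t : R) :
    (Fintype.card R : ℤ) * sumCount Fᶜ m t =
      ((Fintype.card R : ℤ) - #F) ^ m +
        (-1) ^ m * (Fintype.card R * sumCount F m t - #F ^ m) := by
  induction m generalizing t with
  | zero => simp only [sumCount_zero]; split_ifs <;> ring
  | succ m ih =>
    have hstep := congrArg (Nat.cast : ℕ → ℤ) (sumCount_compl_succ_add F m t)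
    push_cast [card_compl] at hstep
    rw [Nat.cast_sub (card_le_univ F)] at hstep
    have hsum : (Fintype.card R : ℤ) * ∑ f ∈ F, (sumCount Fᶜ m (t - f) : ℤ) =
        #F * ((Fintype.card R : ℤ) - #F) ^ m + (-1) ^ m *
          (∑ f ∈ F, (Fintype.card R : ℤ) * sumCount F m (t - f) - #F * #F ^ m) := by
      simp only [mul_sum, ih, mul_sub, sum_add_distrib, sum_sub_distrib, sum_const, nsmul_eq_mul]
      ring
    rw [sumCount_succ F]
    push_cast
    rw [mul_sum]
    linear_combination (Fintype.card R : ℤ) * hstep - hsum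

lemma sumCount_singleton_zero (m : ℕ) (t : R) :
    sumCount {0} m t = if t = 0 then 1 else 0 := by
  have h : (Fintype.piFinset fun _ : Fin m => ({0} : Finset R)) = {0} :=
    Fintype.piFinset_singleton (0 : Fin m → R)
  rw [sumCount, h]
  split_ifs with ht <;> simp [filter_singleton, eq_comm, ht]

lemma sumCount_pair {s : R} (hs : s ≠ 0) (m : ℕ) (t : R) :
    sumCount {0, s} m t = #{T : Finset (Fin m) | #T • s = t} := by
  refine card_nbij' (fun u => ({i | u i = s} : Finset (Fin m)))
    (fun T i => if i ∈ T then s else 0) ?_ ?_ ?_ ?_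
  · intro u hu
    simp only [mem_coe, mem_filter, Fintype.mem_piFinset, mem_univ, true_and] at hu ⊢
    rw [← hu.2, ← sum_const, sum_filter]
    refine sum_congr rfl fun i _ => ?_
    rcases mem_insert.mp (hu.1 i) with h | h
    · simp [h, hs.symm]
    · simp_all
  · intro T hT
    simp only [mem_coe, mem_filter, Fintype.mem_piFinset, mem_univ, true_and] at hT ⊢
    refine ⟨fun i => by split_ifs <;> simp, ?_⟩
    rw [sum_ite_mem, univ_inter, sum_const, hT]
  · intro u hu
    simp only [mem_coe, mem_filter, Fintype.mem_piFinset, mem_insert, mem_singleton] at hu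
    funext i
    rcases hu.1 i with h | h <;> simp [h, hs.symm]
  · intro T _
    ext i
    by_cases hi : i ∈ T <;> simp [hi, hs.symm]

lemma card_mul_sumCount_compl_zero [Fintype R] (m : ℕ) :
    (Fintype.card R : ℤ) * sumCount ({0} : Finset R)ᶜ m 0 =
      ((Fintype.card R : ℤ) - 1) ^ m + (-1) ^ m * ((Fintype.card R : ℤ) - 1) := by
  rw [card_mul_sumCount_compl, sumCount_singleton_zero, if_pos rfl, card_singleton]
  push_cast
  ring

lemma card_filter_forall_ne_sum [Fintype R] (m : ℕ) (S : Finset R) :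
    #{u : Fin m → R | (∀ i, u i ≠ 0 ∧ u i ≠ ∑ j, u j) ∧ ∑ j, u j ∈ S} =
      ∑ s ∈ S, sumCount {0, s}ᶜ m s := by
  rw [card_eq_sum_card_fiberwise (f := fun u => ∑ j, u j) (t := S)
    fun u hu => (mem_filter.mp hu).2.2]
  refine sum_congr rfl fun s hs => congrArg card ?_
  ext u
  simp only [mem_filter, mem_univ, true_and, Fintype.mem_piFinset, mem_compl, mem_insert,
    mem_singleton, not_or]
  constructor
  · rintro ⟨⟨hu, -⟩, rfl⟩
    exact ⟨hu, rfl⟩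
  · rintro ⟨hu, rfl⟩
    exact ⟨⟨hu, hs⟩, rfl⟩

end SumCount

section Cyclic

variable {R : Type*} [AddCommGroup R] [DecidableEq R] [Fintype R] [IsAddCyclic R]

lemma card_filter_zsmul_eq_zero (n : ℤ) :
    #{s : R | n • s = 0} = Int.gcd n (Fintype.card R) := by
  have hker : Nat.card (nsmulAddMonoidHom n.natAbs : R →+ R).ker = #{s : R | n • s = 0} := by
    rw [← Fintype.card_subtype, ← Nat.card_eq_fintype_card]
    simp [AddMonoidHom.mem_ker]
  rw [← hker, IsAddCyclic.card_nsmulAddMonoidHom_ker, Nat.card_eq_fintype_card, Int.gcd,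
    Nat.gcd_comm, Int.natAbs_natCast]

lemma card_filter_nsmul_eq_self (j : ℕ) :
    (#{s ∈ univ.erase (0 : R) | j • s = s} : ℤ) =
      Int.gcd ((j : ℤ) - 1) (Fintype.card R) - 1 := by
  have hiff : ∀ s : R, j • s = s ↔ ((j : ℤ) - 1) • s = 0 := fun s => by
    rw [sub_zsmul, natCast_zsmul, one_zsmul, ← sub_eq_add_neg, sub_eq_zero]
  have hfilter : {s ∈ univ.erase (0 : R) | j • s = s} =
      ({s : R | ((j : ℤ) - 1) • s = 0} : Finset R).erase 0 := by
    ext s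
    simp only [mem_filter, mem_erase, mem_univ, and_true, true_and, hiff]
  have hpos : 0 < Int.gcd ((j : ℤ) - 1) (Fintype.card R) :=
    Int.gcd_pos_of_ne_zero_right _ (by exact_mod_cast Fintype.card_ne_zero)
  rw [hfilter, card_erase_of_mem (by simp), card_filter_zsmul_eq_zero, Nat.cast_sub hpos,
    Nat.cast_one]

lemma sum_sumCount_pair (m : ℕ) :
    ∑ s ∈ univ.erase (0 : R), (sumCount {0, s} m s : ℤ) =
      ∑ j ∈ range (m + 1), (m.choose j : ℤ) * Int.gcd ((j : ℤ) - 1) (Fintype.card R) -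
        2 ^ m := by
  calc ∑ s ∈ univ.erase (0 : R), (sumCount {0, s} m s : ℤ)
      = ∑ T : Finset (Fin m), ∑ s ∈ univ.erase (0 : R), if #T • s = s then 1 else 0 := by
        rw [sum_comm]
        refine sum_congr rfl fun s hs => ?_
        rw [sumCount_pair (ne_of_mem_erase hs), sum_boole]
    _ = ∑ T ∈ (univ : Finset (Fin m)).powerset,
          ((Int.gcd ((#T : ℤ) - 1) (Fintype.card R) : ℤ) - 1) := by
        rw [powerset_univ]
        refine sum_congr rfl fun T _ => ?_
        rw [sum_boole, card_filter_nsmul_eq_self]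
    _ = _ := by
        rw [sum_powerset_apply_card fun j : ℕ => (Int.gcd ((j : ℤ) - 1) (Fintype.card R) : ℤ) - 1,
          card_univ, Fintype.card_fin]
        simp only [nsmul_eq_mul, mul_sub, mul_one, sum_sub_distrib]
        congr
        exact_mod_cast Nat.sum_range_choose m

lemma card_mul_sum_sumCount_pair_compl (m : ℕ) :
    (Fintype.card R : ℤ) * ∑ s ∈ univ.erase (0 : R), (sumCount {0, s}ᶜ m s : ℤ) =
      ((Fintype.card R : ℤ) - 1) * ((Fintype.card R : ℤ) - 2) ^ m -
        (-2) ^ m * (2 * (Fintype.card R : ℤ) - 1) + (-1) ^ m * (Fintype.card R : ℤ) *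
          ∑ j ∈ range (m + 1), (m.choose j : ℤ) * Int.gcd ((j : ℤ) - 1) (Fintype.card R) := by
  have hterm : ∀ s ∈ univ.erase (0 : R), (Fintype.card R : ℤ) * sumCount {0, s}ᶜ m s =
      ((Fintype.card R : ℤ) - 2) ^ m - (-2) ^ m +
        (-1) ^ m * (Fintype.card R : ℤ) * sumCount {0, s} m s := fun s hs => by
    rw [card_mul_sumCount_compl, card_pair (ne_of_mem_erase hs).symm]
    push_cast
    rw [neg_pow (2 : ℤ)]
    ring
  have hcard : (#(univ.erase (0 : R)) : ℤ) = Fintype.card R - 1 := by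
    rw [card_erase_of_mem (mem_univ _), card_univ, Nat.cast_sub Fintype.card_pos, Nat.cast_one]
  rw [mul_sum, sum_congr rfl hterm, sum_add_distrib, sum_const, ← mul_sum, sum_sumCount_pair,
    nsmul_eq_mul, hcard, neg_pow (2 : ℤ)]
  ring

end Cyclic

section Matrices

variable {k q : ℕ}

lemma forall_fin_two_mul {P : Fin (2 * k) → Prop} :
    (∀ j, P j) ↔ (∀ i : Fin k, P ⟨i, by omega⟩) ∧ ∀ i : Fin k, P ⟨i + k, by omega⟩ := by
  refine ⟨fun h => ⟨fun _ => h _, fun _ => h _⟩, fun ⟨hlo, hhi⟩ ⟨j, hj⟩ => ?_⟩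
  rcases lt_or_ge j k with hjk | hjk
  · exact hlo ⟨j, hjk⟩
  · simpa [Nat.sub_add_cancel hjk] using hhi ⟨j - k, by omega⟩

lemma forall_fin_two_mul_add_one {P : Fin (2 * k + 1) → Prop} :
    (∀ j, P j) ↔ ((∀ i : Fin k, P ⟨i, by omega⟩) ∧ ∀ i : Fin k, P ⟨i + k, by omega⟩) ∧
      P (Fin.last _) := by
  rw [Fin.forall_fin_succ', forall_fin_two_mul]
  rfl

variable (u : Fin k → ZMod q) (i : Fin k)

lemma vecMul_Ztilde_of_lt : Matrix.vecMul u (Gmod (Ztilde k) q) ⟨i, by omega⟩ = u i := by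
  simp [Matrix.vecMul, dotProduct, Gmod, Ztilde, Fin.val_inj]

lemma vecMul_Ztilde_add :
    Matrix.vecMul u (Gmod (Ztilde k) q) ⟨i + k, by omega⟩ = ∑ j, u j - u i := by
  simp [Matrix.vecMul, dotProduct, Gmod, Ztilde, Fin.val_inj, ite_eq_left_iff, sum_ite,
    filter_ne', sum_erase_eq_sub]
  omega

lemma vecMul_Ztilde_last : Matrix.vecMul u (Gmod (Ztilde k) q) (Fin.last _) = ∑ j, u j := by
  simp [Matrix.vecMul, dotProduct, Gmod, Ztilde]
  omega

lemma vecMul_Ntilde_of_lt : Matrix.vecMul u (Gmod (Ntilde k) q) ⟨i, by omega⟩ = u i := by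
  simp [Matrix.vecMul, dotProduct, Gmod, Ntilde, Fin.val_inj]

lemma vecMul_Ntilde_add :
    Matrix.vecMul u (Gmod (Ntilde k) q) ⟨i + k, by omega⟩ = ∑ j, u j - u i := by
  simp [Matrix.vecMul, dotProduct, Gmod, Ntilde, Fin.val_inj, sum_ite, filter_ne',
    sum_erase_eq_sub]

lemma vecMul_Ztilde_ne_zero_iff :
    (∀ j, Matrix.vecMul u (Gmod (Ztilde k) q) j ≠ 0) ↔
      (∀ i, u i ≠ 0 ∧ u i ≠ ∑ j, u j) ∧ ∑ j, u j ≠ 0 := by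
  simp only [forall_fin_two_mul_add_one, vecMul_Ztilde_of_lt, vecMul_Ztilde_add,
    vecMul_Ztilde_last, sub_ne_zero, ne_comm (a := ∑ j, u j), forall_and]

lemma vecMul_Ntilde_ne_zero_iff :
    (∀ j, Matrix.vecMul u (Gmod (Ntilde k) q) j ≠ 0) ↔ ∀ i, u i ≠ 0 ∧ u i ≠ ∑ j, u j := by
  simp only [forall_fin_two_mul, vecMul_Ntilde_of_lt, vecMul_Ntilde_add, sub_ne_zero,
    ne_comm (a := ∑ j, u j), forall_and]

variable [NeZero q]

lemma chiQuasi_Ztilde :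
    chiQuasi (Ztilde k) q = ∑ s ∈ univ.erase (0 : ZMod q), sumCount {0, s}ᶜ k s := by
  rw [← card_filter_forall_ne_sum, chiQuasi, ← Set.ncard_coe_finset]
  congr 1
  ext u
  simp [vecMul_Ztilde_ne_zero_iff]

lemma chiQuasi_Ntilde : chiQuasi (Ntilde k) q = ∑ s : ZMod q, sumCount {0, s}ᶜ k s := by
  rw [← card_filter_forall_ne_sum, chiQuasi, ← Set.ncard_coe_finset]
  congr 1
  ext u
  simp [vecMul_Ntilde_ne_zero_iff]

end Matrices

theorem stmt18_general (k q : ℕ) (hq : 1 ≤ q) :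
    (q : ℤ) * chiQuasi (Ztilde k) q =
        ((q : ℤ) - 1) * ((q : ℤ) - 2) ^ k - (-2 : ℤ) ^ k * (2 * (q : ℤ) - 1) +
          (-1 : ℤ) ^ k * (q : ℤ) *
            ∑ j ∈ Finset.range (k + 1),
              (Nat.choose k j : ℤ) * (Int.gcd ((j : ℤ) - 1) (q : ℤ) : ℤ) ∧
    (q : ℤ) * chiQuasi (Ntilde k) q =
        ((q : ℤ) - 1) ^ k + (-1 : ℤ) ^ k * ((q : ℤ) - 1) +
          (q : ℤ) * chiQuasi (Ztilde k) q := by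
  have : NeZero q := ⟨by omega⟩
  have hZ := card_mul_sum_sumCount_pair_compl (R := ZMod q) k
  have hzero := card_mul_sumCount_compl_zero (R := ZMod q) k
  rw [ZMod.card] at hZ hzero
  rw [chiQuasi_Ntilde, chiQuasi_Ztilde, ← add_sum_erase _ _ (mem_univ 0), pair_eq_singleton]
  push_cast
  exact ⟨hZ, by rw [mul_add, hzero]⟩

theorem stmt18 (k q : ℕ) (hk : 2 ≤ k) (hq : 1 ≤ q) :
    (q : ℤ) * chiQuasi (Ztilde k) q =
        ((q : ℤ) - 1) * ((q : ℤ) - 2) ^ k - (-2 : ℤ) ^ k * (2 * (q : ℤ) - 1) +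
          (-1 : ℤ) ^ k * (q : ℤ) *
            ∑ j ∈ Finset.range (k + 1),
              (Nat.choose k j : ℤ) * (Int.gcd ((j : ℤ) - 1) (q : ℤ) : ℤ) ∧
    (q : ℤ) * chiQuasi (Ntilde k) q =
        ((q : ℤ) - 1) ^ k + (-1 : ℤ) ^ k * ((q : ℤ) - 1) +
          (q : ℤ) * chiQuasi (Ztilde k) q :=
  stmt18_general k q hq

end ArrCode
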